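/- arXiv:1409.8056 — 5 statements merged into one kernel-verified Lean document; each statement's English description precedes it below -/
import Mathlib

section
/- A relation R between graphs G and G' over a common base graph A is a simulation if and only if the first projection R → G (restriction of the projection from the pullback G ×_A G') is a graph fibration; accordingly, R is a bisimulation iff both projections are graph fibrations. -/
/-- A reflexive graph: edges with source, target, and identity edges. -/
structure ReflGraph where
  V : Type
  E : Type
  src : E → V
  tgt : E → V
  eid : V → E
  src_eid : ∀ v, src (eid v) = v
  tgt_eid : ∀ v, tgt (eid v) = v

/-- A morphism of reflexive graphs. -/
structure GraphHom (G H : ReflGraph) where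
  onV : G.V → H.V
  onE : G.E → H.E
  map_src : ∀ e, onV (G.src e) = H.src (onE e)
  map_tgt : ∀ e, onV (G.tgt e) = H.tgt (onE e)
  map_eid : ∀ v, onE (G.eid v) = H.eid (onV v)

/-- An edge `e : x' → x` is a transition *from* `x` (its target) *to* `x'` (its source).
A graph fibration: every edge `e' : y → f x` in `H` lifts to an edge `e : x' → x` in `G`. -/
def IsFibration {G H : ReflGraph} (f : GraphHom G H) : Prop :=
  ∀ (x : G.V) (e' : H.E), H.tgt e' = f.onV x →
    ∃ e : G.E, G.tgt e = x ∧ f.onE e = e'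

/-- A relation between `G` and `G'` over `A`: a subgraph of the pullback `G ×_A G'`. -/
structure RelOver {A G G' : ReflGraph} (p : GraphHom G A) (p' : GraphHom G' A) where
  RV : G.V → G'.V → Prop
  RE : G.E → G'.E → Prop
  overV : ∀ x y, RV x y → p.onV x = p'.onV y
  overE : ∀ e e', RE e e' → p.onE e = p'.onE e'
  src_rel : ∀ e e', RE e e' → RV (G.src e) (G'.src e')
  tgt_rel : ∀ e e', RE e e' → RV (G.tgt e) (G'.tgt e')
  eid_rel : ∀ x y, RV x y → RE (G.eid x) (G'.eid y)

/-- The relation `R`, viewed as a (reflexive) graph in its own right. -/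
def RelGraph {A G G' : ReflGraph} {p : GraphHom G A} {p' : GraphHom G' A}
    (R : RelOver p p') : ReflGraph where
  V := {q : G.V × G'.V // R.RV q.1 q.2}
  E := {q : G.E × G'.E // R.RE q.1 q.2}
  src e := ⟨(G.src e.val.1, G'.src e.val.2), R.src_rel _ _ e.property⟩
  tgt e := ⟨(G.tgt e.val.1, G'.tgt e.val.2), R.tgt_rel _ _ e.property⟩
  eid v := ⟨(G.eid v.val.1, G'.eid v.val.2), R.eid_rel _ _ v.property⟩
  src_eid v := Subtype.ext (by
    show (G.src (G.eid v.val.1), G'.src (G'.eid v.val.2)) = v.val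
    rw [G.src_eid, G'.src_eid])
  tgt_eid v := Subtype.ext (by
    show (G.tgt (G.eid v.val.1), G'.tgt (G'.eid v.val.2)) = v.val
    rw [G.tgt_eid, G'.tgt_eid])

/-- First projection `R → G` (restriction of the projection from the pullback). -/
def relProj1 {A G G' : ReflGraph} {p : GraphHom G A} {p' : GraphHom G' A}
    (R : RelOver p p') : GraphHom (RelGraph R) G where
  onV v := v.val.1
  onE e := e.val.1
  map_src _ := rfl
  map_tgt _ := rfl
  map_eid _ := rfl

/-- Second projection `R → G'`. -/
def relProj2 {A G G' : ReflGraph} {p : GraphHom G A} {p' : GraphHom G' A}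
    (R : RelOver p p') : GraphHom (RelGraph R) G' where
  onV v := v.val.2
  onE e := e.val.2
  map_src _ := rfl
  map_tgt _ := rfl
  map_eid _ := rfl

/-- `R` is a simulation: every transition `e : x' → x` of `G` with `R (x, y)` is matched
by a transition `e' : y' → y` of `G'` with `R (e, e')`. -/
def IsSimulation {A G G' : ReflGraph} {p : GraphHom G A} {p' : GraphHom G' A}
    (R : RelOver p p') : Prop :=
  ∀ (e : G.E) (y : G'.V), R.RV (G.tgt e) y →
    ∃ e' : G'.E, G'.tgt e' = y ∧ R.RE e e'

/-- The converse of `R` is a simulation. -/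
def ConverseIsSimulation {A G G' : ReflGraph} {p : GraphHom G A} {p' : GraphHom G' A}
    (R : RelOver p p') : Prop :=
  ∀ (e' : G'.E) (x : G.V), R.RV x (G'.tgt e') →
    ∃ e : G.E, G.tgt e = x ∧ R.RE e e'

/-- A bisimulation is a simulation whose converse is also a simulation. -/
def IsBisimulation {A G G' : ReflGraph} {p : GraphHom G A} {p' : GraphHom G' A}
    (R : RelOver p p') : Prop :=
  IsSimulation R ∧ ConverseIsSimulation R

namespace RelOver

variable {A G G' : ReflGraph} {p : GraphHom G A} {p' : GraphHom G' A} (R : RelOver p p')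

theorem relGraph_tgt_eq_iff (e : (RelGraph R).E) (v : (RelGraph R).V) :
    (RelGraph R).tgt e = v ↔ G.tgt e.val.1 = v.val.1 ∧ G'.tgt e.val.2 = v.val.2 :=
  Subtype.ext_iff.trans Prod.ext_iff

theorem isSimulation_iff_isFibration_relProj1 :
    IsSimulation R ↔ IsFibration (relProj1 R) := by
  constructor
  · rintro hsim ⟨⟨x, y⟩, hxy⟩ e (rfl : G.tgt e = x)
    obtain ⟨e', rfl, he⟩ := hsim e y hxy
    exact ⟨⟨(e, e'), he⟩, (relGraph_tgt_eq_iff R _ _).2 ⟨rfl, rfl⟩, rfl⟩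
  · intro hfib e y hy
    obtain ⟨⟨⟨f, f'⟩, hf⟩, htgt, rfl : f = e⟩ := hfib ⟨(G.tgt e, y), hy⟩ e rfl
    exact ⟨f', ((relGraph_tgt_eq_iff R _ _).1 htgt).2, hf⟩

theorem converseIsSimulation_iff_isFibration_relProj2 :
    ConverseIsSimulation R ↔ IsFibration (relProj2 R) := by
  constructor
  · rintro hsim ⟨⟨x, y⟩, hxy⟩ e' (rfl : G'.tgt e' = y)
    obtain ⟨e, rfl, he⟩ := hsim e' x hxy
    exact ⟨⟨(e, e'), he⟩, (relGraph_tgt_eq_iff R _ _).2 ⟨rfl, rfl⟩, rfl⟩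
  · intro hfib e' x hx
    obtain ⟨⟨⟨f, f'⟩, hf⟩, htgt, rfl : f' = e'⟩ := hfib ⟨(x, G'.tgt e'), hx⟩ e' rfl
    exact ⟨f, ((relGraph_tgt_eq_iff R _ _).1 htgt).1, hf⟩

end RelOver

/-- `R` is a simulation iff the first projection `R → G` is a graph
fibration; accordingly, `R` is a bisimulation iff both projections are graph fibrations. -/
theorem stmt0 {A G G' : ReflGraph} (p : GraphHom G A) (p' : GraphHom G' A)
    (R : RelOver p p') :
    (IsSimulation R ↔ IsFibration (relProj1 R)) ∧
    (IsBisimulation R ↔ (IsFibration (relProj1 R) ∧ IsFibration (relProj2 R))) :=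
  ⟨R.isSimulation_iff_isFibration_relProj1,
    and_congr R.isSimulation_iff_isFibration_relProj1
      R.converseIsSimulation_iff_isFibration_relProj2⟩
end

section
/- A morphism f : G → G' of reflexive graphs over A is a functional bisimulation iff it has the right lifting property with respect to the map y(t) : y(⋆) → y[1] picking out the target of the unique non-identity edge: for every commuting square from y(t) to f there exists a diagonal filler making both triangles commute. -/
/-- Composition of graph morphisms: `g.comp f = g ∘ f`. -/
def GraphHom.comp {G H K : ReflGraph} (g : GraphHom H K) (f : GraphHom G H) :
    GraphHom G K where
  onV x := g.onV (f.onV x)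
  onE e := g.onE (f.onE e)
  map_src e := by
    show g.onV (f.onV (G.src e)) = K.src (g.onE (f.onE e))
    rw [f.map_src, g.map_src]
  map_tgt e := by
    show g.onV (f.onV (G.tgt e)) = K.tgt (g.onE (f.onE e))
    rw [f.map_tgt, g.map_tgt]
  map_eid v := by
    show g.onE (f.onE (G.eid v)) = K.eid (g.onV (f.onV v))
    rw [f.map_eid, g.map_eid]

/-- The one-vertex reflexive graph `y(⋆)`. -/
def oneV : ReflGraph where
  V := Unit
  E := Unit
  src _ := ()
  tgt _ := ()
  eid _ := ()
  src_eid _ := rfl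
  tgt_eid _ := rfl

/-- The representable reflexive graph `y[1]`: two vertices (`false`, `true`), one
non-identity edge `none : false → true`, and the two identity edges `some b`. -/
def oneE : ReflGraph where
  V := Bool
  E := Option Bool
  src e := e.getD false
  tgt e := e.getD true
  eid v := some v
  src_eid _ := rfl
  tgt_eid _ := rfl

/-- The map `y(t) : y(⋆) → y[1]` picking out the target of the non-identity edge. -/
def yt : GraphHom oneV oneE where
  onV _ := true
  onE _ := some true
  map_src _ := rfl
  map_tgt _ := rfl
  map_eid _ := rfl

/-- A functional (strong) bisimulation: for every `x` and edge `e' : y' → f x` in `G'`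
there is an edge `e : x' → x` of `G` with `f e = e'`. -/
def IsFunctionalBisimulation {G G' : ReflGraph} (f : GraphHom G G') : Prop :=
  IsFibration f

/-! By the Yoneda lemma, morphisms `y(⋆) → G` are the vertices of `G` and morphisms
`y[1] → G` are its edges, with precomposition by `y(t)` taking an edge to its target. Under this
dictionary a commuting square from `y(t)` to `f` is a vertex `x` of `G` with an edge `e'` of `G'`
into `f x`, and a diagonal filler is an edge of `G` into `x` lying over `e'`. -/

@[ext]
lemma GraphHom.ext {G H : ReflGraph} {f g : GraphHom G H}
    (hV : f.onV = g.onV) (hE : f.onE = g.onE) : f = g := by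
  cases f; cases g; cases hV; cases hE; rfl

def vertexEquiv (G : ReflGraph) : G.V ≃ GraphHom oneV G where
  toFun x :=
    { onV := fun _ => x
      onE := fun _ => G.eid x
      map_src := fun _ => (G.src_eid x).symm
      map_tgt := fun _ => (G.tgt_eid x).symm
      map_eid := fun _ => rfl }
  invFun u := u.onV ()
  left_inv _ := rfl
  right_inv u := by
    ext ⟨⟩
    · rfl
    · exact (u.map_eid ()).symm

def edgeEquiv (G : ReflGraph) : G.E ≃ GraphHom oneE G where
  toFun e :=
    { onV := fun b => bif b then G.tgt e else G.src e
      onE := fun o => o.elim e fun b => G.eid (bif b then G.tgt e else G.src e)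
      map_src := fun
        | none => rfl
        | some _ => (G.src_eid _).symm
      map_tgt := fun
        | none => rfl
        | some _ => (G.tgt_eid _).symm
      map_eid := fun _ => rfl }
  invFun v := v.onE none
  left_inv _ := rfl
  right_inv v := by
    have hV : (fun b => bif b then G.tgt (v.onE none) else G.src (v.onE none)) = v.onV := by
      funext b
      cases b
      · exact (v.map_src none).symm
      · exact (v.map_tgt none).symm
    apply GraphHom.ext
    · exact hV
    · funext o
      cases o with
      | none => rfl
      | some b => exact (congrArg G.eid (congrFun hV b)).trans (v.map_eid b).symm

lemma comp_vertexEquiv {G H : ReflGraph} (f : GraphHom G H) (x : G.V) :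
    f.comp (vertexEquiv G x) = vertexEquiv H (f.onV x) := by
  ext ⟨⟩
  · rfl
  · exact f.map_eid x

lemma comp_edgeEquiv {G H : ReflGraph} (f : GraphHom G H) (e : G.E) :
    f.comp (edgeEquiv G e) = edgeEquiv H (f.onE e) := by
  have hV : (fun b => f.onV (bif b then G.tgt e else G.src e)) =
      fun b => bif b then H.tgt (f.onE e) else H.src (f.onE e) := by
    funext b
    cases b
    · exact f.map_src e
    · exact f.map_tgt e
  apply GraphHom.ext
  · exact hV
  · funext o
    cases o with
    | none => rfl
    | some b => exact (f.map_eid _).trans (congrArg H.eid (congrFun hV b))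

lemma edgeEquiv_comp_yt {G : ReflGraph} (e : G.E) :
    (edgeEquiv G e).comp yt = vertexEquiv G (G.tgt e) :=
  rfl

theorem stmt1_general {G G' : ReflGraph} (f : GraphHom G G') :
    IsFunctionalBisimulation f ↔
      ∀ (u : GraphHom oneV G) (v : GraphHom oneE G'),
        f.comp u = v.comp yt →
          ∃ d : GraphHom oneE G, d.comp yt = u ∧ f.comp d = v := by
  constructor
  · intro hf u v hsquare
    obtain ⟨x, rfl⟩ := (vertexEquiv G).surjective u
    obtain ⟨e', rfl⟩ := (edgeEquiv G').surjective v
    rw [comp_vertexEquiv, edgeEquiv_comp_yt, (vertexEquiv G').apply_eq_iff_eq] at hsquare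
    obtain ⟨e, rfl, rfl⟩ := hf x e' hsquare.symm
    exact ⟨edgeEquiv G e, edgeEquiv_comp_yt e, comp_edgeEquiv f e⟩
  · intro hlift x e' he'
    obtain ⟨d, hd_tgt, hd_over⟩ := hlift (vertexEquiv G x) (edgeEquiv G' e')
      (by rw [comp_vertexEquiv, edgeEquiv_comp_yt, he'])
    obtain ⟨e, rfl⟩ := (edgeEquiv G).surjective d
    rw [edgeEquiv_comp_yt, (vertexEquiv G).apply_eq_iff_eq] at hd_tgt
    rw [comp_edgeEquiv, (edgeEquiv G').apply_eq_iff_eq] at hd_over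
    exact ⟨e, hd_tgt, hd_over⟩

/-- a morphism `f : G → G'` of reflexive graphs over `A` is a functional
bisimulation iff it has the right lifting property with respect to
`y(t) : y(⋆) → y[1]`: every commuting square from `y(t)` to `f` has a diagonal filler. -/
theorem stmt1 {A G G' : ReflGraph} (pG : GraphHom G A) (pG' : GraphHom G' A)
    (f : GraphHom G G') (hover : pG'.comp f = pG) :
    IsFunctionalBisimulation f ↔
      ∀ (u : GraphHom oneV G) (v : GraphHom oneE G'),
        f.comp u = v.comp yt →
          ∃ d : GraphHom oneE G, d.comp yt = u ∧ f.comp d = v :=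
  stmt1_general f
end

section
/- Given a morphism p : G → A of reflexive graphs where A is a graph with complementarity, define G^W as the pullback of A^W along p, ℓ^G = ℓ^A ∘ p^W, and the relation ⊨^G by (x,y) ⊨^G z iff (p x, p y) ⊨^A p z. Then for any symmetric subrelation R ⊆ ⊨^G, the tuple (G, G^W, R, ℓ^G) is a graph with complementarity, and p is a morphism of graphs with complementarity. -/
/-! `Σ` is the free reflexive graph on a single endo-edge `♥`; a morphism to `Σ`
amounts to a `Bool`-labelling of edges (`false` = silent/identity, `true` = `♥`)
sending identity edges to `false`. -/

/-- A complementarity structure on a reflexive graph `G`: a closed-world subgraph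
`G^W` (given by `WV`/`WE`), a relation `⊨ : G² ⇸ G^W` (given by `cV`/`cE`, a subgraph
of `G² × G^W`), and a labelling `ℓ : G^W → Σ` (given by `lab`, defined on all edges
but only meaningful on `G^W`), such that the composite relation `G² ⇸ G^W → Σ` is
partially functional and symmetric. -/
structure ComplStruct (G : ReflGraph) where
  WV : G.V → Prop
  WE : G.E → Prop
  W_src : ∀ e, WE e → WV (G.src e)
  W_tgt : ∀ e, WE e → WV (G.tgt e)
  W_eid : ∀ v, WV v → WE (G.eid v)
  cV : G.V → G.V → G.V → Prop
  cE : G.E → G.E → G.E → Prop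
  cV_W : ∀ {x y z}, cV x y z → WV z
  cE_W : ∀ {e e' w}, cE e e' w → WE w
  c_src : ∀ {e e' w}, cE e e' w → cV (G.src e) (G.src e') (G.src w)
  c_tgt : ∀ {e e' w}, cE e e' w → cV (G.tgt e) (G.tgt e') (G.tgt w)
  c_eid : ∀ {x y z}, cV x y z → cE (G.eid x) (G.eid y) (G.eid z)
  lab : G.E → Bool
  lab_eid : ∀ v, lab (G.eid v) = false
  pfun : ∀ {e e' w w'}, cE e e' w → cE e e' w' → lab w = lab w'
  symmV : ∀ {x y z}, cV x y z → ∃ z', cV y x z'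
  symmE : ∀ {e e' w}, cE e e' w → ∃ w', cE e' e w' ∧ lab w' = lab w

/-- A morphism of graphs with complementarity. -/
structure IsComplHom {G H : ReflGraph} (CG : ComplStruct G) (CH : ComplStruct H)
    (f : GraphHom G H) : Prop where
  wv : ∀ v, CG.WV v → CH.WV (f.onV v)
  we : ∀ e, CG.WE e → CH.WE (f.onE e)
  lab_eq : ∀ e, CG.WE e → CH.lab (f.onE e) = CG.lab e
  compV : ∀ x y z, CG.cV x y z → CH.cV (f.onV x) (f.onV y) (f.onV z)
  compE : ∀ e e' w, CG.cE e e' w → CH.cE (f.onE e) (f.onE e') (f.onE w)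


namespace ComplStruct

variable {A G : ReflGraph} (CA : ComplStruct A) (p : GraphHom G A)
  {RV : G.V → G.V → G.V → Prop} {RE : G.E → G.E → G.E → Prop}

def comap
    (hsubV : ∀ x y z, RV x y z → CA.cV (p.onV x) (p.onV y) (p.onV z))
    (hsubE : ∀ e e' w, RE e e' w → CA.cE (p.onE e) (p.onE e') (p.onE w))
    (hsrc : ∀ e e' w, RE e e' w → RV (G.src e) (G.src e') (G.src w))
    (htgt : ∀ e e' w, RE e e' w → RV (G.tgt e) (G.tgt e') (G.tgt w))
    (heid : ∀ x y z, RV x y z → RE (G.eid x) (G.eid y) (G.eid z))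
    (hsymV : ∀ x y z, RV x y z → ∃ z', RV y x z')
    (hsymE : ∀ e e' w, RE e e' w → ∃ w', RE e' e w' ∧ CA.lab (p.onE w') = CA.lab (p.onE w)) :
    ComplStruct G where
  WV v := CA.WV (p.onV v)
  WE e := CA.WE (p.onE e)
  W_src e h := by rw [p.map_src]; exact CA.W_src _ h
  W_tgt e h := by rw [p.map_tgt]; exact CA.W_tgt _ h
  W_eid v h := by rw [p.map_eid]; exact CA.W_eid _ h
  cV := RV
  cE := RE
  cV_W h := CA.cV_W (hsubV _ _ _ h)
  cE_W h := CA.cE_W (hsubE _ _ _ h)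
  c_src h := hsrc _ _ _ h
  c_tgt h := htgt _ _ _ h
  c_eid h := heid _ _ _ h
  lab e := CA.lab (p.onE e)
  lab_eid v := by rw [p.map_eid]; exact CA.lab_eid _
  pfun h h' := CA.pfun (hsubE _ _ _ h) (hsubE _ _ _ h')
  symmV h := hsymV _ _ _ h
  symmE h := hsymE _ _ _ h

theorem isComplHom_comap
    (hsubV : ∀ x y z, RV x y z → CA.cV (p.onV x) (p.onV y) (p.onV z))
    (hsubE : ∀ e e' w, RE e e' w → CA.cE (p.onE e) (p.onE e') (p.onE w))
    (hsrc : ∀ e e' w, RE e e' w → RV (G.src e) (G.src e') (G.src w))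
    (htgt : ∀ e e' w, RE e e' w → RV (G.tgt e) (G.tgt e') (G.tgt w))
    (heid : ∀ x y z, RV x y z → RE (G.eid x) (G.eid y) (G.eid z))
    (hsymV : ∀ x y z, RV x y z → ∃ z', RV y x z')
    (hsymE : ∀ e e' w, RE e e' w → ∃ w', RE e' e w' ∧ CA.lab (p.onE w') = CA.lab (p.onE w)) :
    IsComplHom (CA.comap p hsubV hsubE hsrc htgt heid hsymV hsymE) CA p where
  wv _ h := h
  we _ h := h
  lab_eq _ _ := rfl
  compV := hsubV
  compE := hsubE

end ComplStruct

/-- given `p : G → A` with `A` a graph with complementarity, pulling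
back the closed-world structure and labelling along `p`, any symmetric subrelation
`R ⊆ ⊨^G` (where `(x,y) ⊨^G z` iff `(p x, p y) ⊨^A p z`) makes `G` a graph with
complementarity, with `p` a morphism of graphs with complementarity. -/
theorem stmt10 {A G : ReflGraph} (CA : ComplStruct A) (p : GraphHom G A)
    (RV : G.V → G.V → G.V → Prop) (RE : G.E → G.E → G.E → Prop)
    -- `R` is a subrelation of the pullback relation `⊨^G`:
    (hsubV : ∀ x y z, RV x y z → CA.cV (p.onV x) (p.onV y) (p.onV z))
    (hsubE : ∀ e e' w, RE e e' w → CA.cE (p.onE e) (p.onE e') (p.onE w))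
    -- `R` is a subgraph of `G² × G^W`:
    (hsrc : ∀ e e' w, RE e e' w → RV (G.src e) (G.src e') (G.src w))
    (htgt : ∀ e e' w, RE e e' w → RV (G.tgt e) (G.tgt e') (G.tgt w))
    (heid : ∀ x y z, RV x y z → RE (G.eid x) (G.eid y) (G.eid z))
    -- `R` is symmetric:
    (hsymV : ∀ x y z, RV x y z → ∃ z', RV y x z')
    (hsymE : ∀ e e' w, RE e e' w → ∃ w', RE e' e w' ∧
      CA.lab (p.onE w') = CA.lab (p.onE w)) :
    ∃ C : ComplStruct G,
      C.WV = (fun v => CA.WV (p.onV v)) ∧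
      C.WE = (fun e => CA.WE (p.onE e)) ∧
      C.lab = (fun e => CA.lab (p.onE e)) ∧
      C.cV = RV ∧ C.cE = RE ∧
      IsComplHom C CA p := by
  exact ⟨CA.comap p hsubV hsubE hsrc htgt heid hsymV hsymE, rfl, rfl, rfl, rfl, rfl,
    CA.isComplHom_comap p hsubV hsubE hsrc htgt heid hsymV hsymE⟩
end

section
/- In a modular graph with complementarity G, for any vertices x, y, z, t: if (x,y) ⊨^G z and (x,y) ⊨^G t, then z and t are strongly bisimilar over Σ. -/
variable {G : ReflGraph}

/-- The closed-world subgraph `G^W`. -/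
def wGraph (G : ReflGraph) (C : ComplStruct G) : ReflGraph where
  V := {v : G.V // C.WV v}
  E := {e : G.E // C.WE e}
  src e := ⟨G.src e.val, C.W_src _ e.property⟩
  tgt e := ⟨G.tgt e.val, C.W_tgt _ e.property⟩
  eid v := ⟨G.eid v.val, C.W_eid _ v.property⟩
  src_eid v := Subtype.ext (by show G.src (G.eid v.val) = v.val; rw [G.src_eid])
  tgt_eid v := Subtype.ext (by show G.tgt (G.eid v.val) = v.val; rw [G.tgt_eid])

/-- The labelling of `G^W` over `Σ`. -/
def wLab (G : ReflGraph) (C : ComplStruct G) : (wGraph G C).E → Bool :=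
  fun e => C.lab e.val

/-- The coherence graph `G^coh`: the domain of the relation `⊨^G`. -/
def cohGraph (G : ReflGraph) (C : ComplStruct G) : ReflGraph where
  V := {q : G.V × G.V // ∃ z, C.cV q.1 q.2 z}
  E := {q : G.E × G.E // ∃ w, C.cE q.1 q.2 w}
  src e := ⟨(G.src e.val.1, G.src e.val.2),
    match e.property with | ⟨w, hw⟩ => ⟨G.src w, C.c_src hw⟩⟩
  tgt e := ⟨(G.tgt e.val.1, G.tgt e.val.2),
    match e.property with | ⟨w, hw⟩ => ⟨G.tgt w, C.c_tgt hw⟩⟩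
  eid v := ⟨(G.eid v.val.1, G.eid v.val.2),
    match v.property with | ⟨z, hz⟩ => ⟨G.eid z, C.c_eid hz⟩⟩
  src_eid v := Subtype.ext (by
    show (G.src (G.eid v.val.1), G.src (G.eid v.val.2)) = v.val
    rw [G.src_eid, G.src_eid])
  tgt_eid v := Subtype.ext (by
    show (G.tgt (G.eid v.val.1), G.tgt (G.eid v.val.2)) = v.val
    rw [G.tgt_eid, G.tgt_eid])

/-- The labelling `(x, y) ↦ x ⇓ y` of `G^coh` over `Σ` (well-defined on closed-world
witnesses by partial functionality; realised here by a choice of witness). -/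
noncomputable def cohLab (G : ReflGraph) (C : ComplStruct G) :
    (cohGraph G C).E → Bool :=
  fun e => C.lab (Classical.choose e.property)

/-- The relation `⊨^G`, viewed as a graph (a subgraph of `G² × G^W`). -/
def complGraph (G : ReflGraph) (C : ComplStruct G) : ReflGraph where
  V := {t : (G.V × G.V) × G.V // C.cV t.1.1 t.1.2 t.2}
  E := {t : (G.E × G.E) × G.E // C.cE t.1.1 t.1.2 t.2}
  src e := ⟨((G.src e.val.1.1, G.src e.val.1.2), G.src e.val.2), C.c_src e.property⟩
  tgt e := ⟨((G.tgt e.val.1.1, G.tgt e.val.1.2), G.tgt e.val.2), C.c_tgt e.property⟩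
  eid v := ⟨((G.eid v.val.1.1, G.eid v.val.1.2), G.eid v.val.2), C.c_eid v.property⟩
  src_eid v := Subtype.ext (by
    show ((G.src (G.eid v.val.1.1), G.src (G.eid v.val.1.2)), G.src (G.eid v.val.2)) = v.val
    rw [G.src_eid, G.src_eid, G.src_eid])
  tgt_eid v := Subtype.ext (by
    show ((G.tgt (G.eid v.val.1.1), G.tgt (G.eid v.val.1.2)), G.tgt (G.eid v.val.2)) = v.val
    rw [G.tgt_eid, G.tgt_eid, G.tgt_eid])

/-- Projection of the relation `⊨^G` onto `G^coh`. -/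
def complProj1 (G : ReflGraph) (C : ComplStruct G) :
    GraphHom (complGraph G C) (cohGraph G C) where
  onV v := ⟨v.val.1, ⟨v.val.2, v.property⟩⟩
  onE e := ⟨e.val.1, ⟨e.val.2, e.property⟩⟩
  map_src _ := Subtype.ext rfl
  map_tgt _ := Subtype.ext rfl
  map_eid _ := Subtype.ext rfl

/-- Projection of the relation `⊨^G` onto `G^W`. -/
def complProj2 (G : ReflGraph) (C : ComplStruct G) :
    GraphHom (complGraph G C) (wGraph G C) where
  onV v := ⟨v.val.2, C.cV_W v.property⟩
  onE e := ⟨e.val.2, C.cE_W e.property⟩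
  map_src _ := Subtype.ext rfl
  map_tgt _ := Subtype.ext rfl
  map_eid _ := Subtype.ext rfl

/-- `G` is modular: (1) every closed-world edge `e : z' → z` under `(x,y) ⊨ z` lifts
to a coherent pair of edges, and (2) every coherent pair of edges into `(x,y)` is
complementary to some edge into `z`. -/
def Modular (G : ReflGraph) (C : ComplStruct G) : Prop :=
  (∀ x y z, C.cV x y z → ∀ e, C.WE e → G.tgt e = z →
    ∃ ex ey, G.tgt ex = x ∧ G.tgt ey = y ∧ C.cE ex ey e) ∧
  (∀ x y z, C.cV x y z → ∀ ex ey, G.tgt ex = x → G.tgt ey = y →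
    (∃ w, C.cE ex ey w) → ∃ e, G.tgt e = z ∧ C.cE ex ey e)

/-- Strong bisimilarity over `Σ` between vertices of two `Bool`-labelled graphs:
there is a relation with the usual strong transfer properties, matching labels. -/
def StrongBisimBool {G H : ReflGraph} (labG : G.E → Bool) (labH : H.E → Bool)
    (x : G.V) (y : H.V) : Prop :=
  ∃ R : G.V → H.V → Prop, R x y ∧
    (∀ a b, R a b → ∀ e, G.tgt e = a →
      ∃ e', H.tgt e' = b ∧ labH e' = labG e ∧ R (G.src e) (H.src e')) ∧
    (∀ a b, R a b → ∀ e', H.tgt e' = b →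
      ∃ e, G.tgt e = a ∧ labG e = labH e' ∧ R (G.src e) (H.src e'))

namespace StrongBisimBool

variable {G H K : ReflGraph} {labG : G.E → Bool} {labH : H.E → Bool} {labK : K.E → Bool}

theorem symm {x : G.V} {y : H.V} (h : StrongBisimBool labG labH x y) :
    StrongBisimBool labH labG y x := by
  obtain ⟨R, hxy, forth, back⟩ := h
  exact ⟨fun b a => R a b, hxy, fun b a hab => back a b hab, fun b a hab => forth a b hab⟩

theorem trans {x : G.V} {y : H.V} {z : K.V} (hxy : StrongBisimBool labG labH x y)
    (hyz : StrongBisimBool labH labK y z) : StrongBisimBool labG labK x z := by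
  obtain ⟨R, hR, forthR, backR⟩ := hxy
  obtain ⟨S, hS, forthS, backS⟩ := hyz
  refine ⟨fun a c => ∃ b, R a b ∧ S b c, ⟨y, hR, hS⟩, ?_, ?_⟩
  · rintro a c ⟨b, hab, hbc⟩ e he
    obtain ⟨f, hf, hlabf, hRsrc⟩ := forthR a b hab e he
    obtain ⟨g, hg, hlabg, hSsrc⟩ := forthS b c hbc f hf
    exact ⟨g, hg, hlabg.trans hlabf, _, hRsrc, hSsrc⟩
  · rintro a c ⟨b, hab, hbc⟩ g hg
    obtain ⟨f, hf, hlabf, hSsrc⟩ := backS b c hbc g hg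
    obtain ⟨e, he, hlabe, hRsrc⟩ := backR a b hab f hf
    exact ⟨e, he, hlabe.trans hlabf, _, hRsrc, hSsrc⟩

end StrongBisimBool

section Complementarity

variable {G : ReflGraph} {C : ComplStruct G}

theorem cohLab_eq {e : (cohGraph G C).E} {w : G.E} (hw : C.cE e.val.1 e.val.2 w) :
    cohLab G C e = C.lab w :=
  C.pfun (Classical.choose_spec e.property) hw

/-- Condition (2) of modularity gives the forth step, condition (1) the back step. -/
theorem Modular.strongBisimBool_coh (hmod : Modular G C) {x y z : G.V} (hz : C.cV x y z) :
    StrongBisimBool (cohLab G C) (wLab G C)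
      (⟨(x, y), z, hz⟩ : (cohGraph G C).V) (⟨z, C.cV_W hz⟩ : (wGraph G C).V) := by
  refine ⟨fun p w => C.cV p.val.1 p.val.2 w.val, hz, ?_, ?_⟩
  · rintro p a hpa ⟨⟨ex, ey⟩, w, hw⟩ he
    obtain ⟨e', he'a, hce'⟩ := hmod.2 _ _ a.val hpa ex ey
      (congrArg (·.val.1) he) (congrArg (·.val.2) he) ⟨w, hw⟩
    exact ⟨⟨e', C.cE_W hce'⟩, Subtype.ext he'a, (cohLab_eq hce').symm, C.c_src hce'⟩
  · rintro p a hpa e' he'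
    obtain ⟨ex, ey, hex, hey, hce'⟩ :=
      hmod.1 _ _ a.val hpa e'.val e'.property (congrArg Subtype.val he')
    exact ⟨⟨(ex, ey), e'.val, hce'⟩, Subtype.ext (Prod.ext hex hey), cohLab_eq hce',
      C.c_src hce'⟩

end Complementarity

/-- in a modular graph with complementarity, if `(x,y) ⊨ z` and
`(x,y) ⊨ t`, then `z` and `t` are strongly bisimilar over `Σ` (as vertices of the
closed-world graph `G^W` labelled over `Σ`). -/
theorem stmt13 (G : ReflGraph) (C : ComplStruct G) (hmod : Modular G C)
    (x y z t : G.V) (hz : C.cV x y z) (ht : C.cV x y t) :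
    StrongBisimBool (wLab G C) (wLab G C)
      (⟨z, C.cV_W hz⟩ : (wGraph G C).V) (⟨t, C.cV_W ht⟩ : (wGraph G C).V) :=
  (hmod.strongBisimBool_coh hz).symm.trans (hmod.strongBisimBool_coh ht)
end

section
/- Let U be a presheaf such that its causal graph G_U is source-linear and acyclic, and let μ be a maximal core of U (no path from μ to any other core in G_U), with G_U target-linear. Then the largest subpresheaf of U avoiding the past of μ is computed pointwise: (U ⧹ μ)(c) = U(c) ∖ past(μ) for all objects c. -/
/-! Finite presheaves over the base category `C` of the CCS playground, presented
concretely: a presheaf `U` is given by its sets of channels `U(⋆)`, players `U[n]`,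
basic (dimension-2) move cells (inputs, outputs, ticks, channel creations, left/right
forks), full fork cells `U(forkₙ)` and synchronisation cells `U(τ)`, together with
the actions of the generating morphisms of `C`, subject to the equations of `C`. -/

/-- Shapes of the dimension-2 (basic) move objects of `C`. -/
inductive MShape : Type where
  | inp (n : ℕ) (a : Fin n)
  | out (n : ℕ) (a : Fin n)
  | tick (n : ℕ)
  | nu (n : ℕ)
  | forkL (n : ℕ)
  | forkR (n : ℕ)

/-- Arity of the target (initial) player of a basic move. -/
def MShape.tgtAr : MShape → ℕ
  | .inp n _ => n
  | .out n _ => n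
  | .tick n => n
  | .nu n => n
  | .forkL n => n
  | .forkR n => n

/-- Arity of the source (final) player of a basic move. -/
def MShape.srcAr : MShape → ℕ
  | .inp n _ => n
  | .out n _ => n
  | .tick n => n
  | .nu n => n + 1
  | .forkL n => n
  | .forkR n => n

/-- The inclusion of the channels of the target player among those of the source
player (the equations `s_i ; t = s_i ; s` of `C`). -/
def MShape.castIdx : (s : MShape) → Fin s.tgtAr → Fin s.srcAr
  | .inp _ _, i => i
  | .out _ _, i => i
  | .tick _, i => i
  | .nu _, i => i.castSucc
  | .forkL _, i => i
  | .forkR _, i => i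

/-- A presheaf over the base category `C` of the CCS playground. -/
structure CPsh where
  chan : Type
  pl : ℕ → Type
  plChan : ∀ {n : ℕ}, pl n → Fin n → chan
  mv : MShape → Type
  mvS : ∀ {s : MShape}, mv s → pl s.srcAr
  mvT : ∀ {s : MShape}, mv s → pl s.tgtAr
  mv_coh : ∀ {s : MShape} (x : mv s) (i : Fin s.tgtAr),
      plChan (mvS x) (s.castIdx i) = plChan (mvT x) i
  fk : ℕ → Type
  fkL : ∀ {n : ℕ}, fk n → mv (.forkL n)
  fkR : ∀ {n : ℕ}, fk n → mv (.forkR n)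
  fk_coh : ∀ {n : ℕ} (x : fk n), mvT (fkL x) = mvT (fkR x)
  tu : ∀ (n : ℕ), Fin n → ∀ (m : ℕ), Fin m → Type
  tuOut : ∀ {n a m c}, tu n a m c → mv (.out m c)
  tuInp : ∀ {n a m c}, tu n a m c → mv (.inp n a)
  tu_coh : ∀ {n a m c} (x : tu n a m c),
      plChan (mvT (tuOut x)) c = plChan (mvT (tuInp x)) a

/-- The elements of a presheaf `U` over `C`. -/
inductive Elem (U : CPsh) : Type where
  | chan (a : U.chan)
  | pl {n : ℕ} (x : U.pl n)
  | mv {s : MShape} (x : U.mv s)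
  | fk {n : ℕ} (x : U.fk n)
  | tu {n : ℕ} {a : Fin n} {m : ℕ} {c : Fin m} (x : U.tu n a m c)

/-- A core of `U`: an element of dimension `> 1` which is not the image of any
element of higher dimension. -/
def IsCore (U : CPsh) : Elem U → Prop
  | .chan _ => False
  | .pl _ => False
  | .mv x =>
      (¬ ∃ (n : ℕ) (y : U.fk n),
        Elem.mv (U.fkL y) = Elem.mv x ∨ Elem.mv (U.fkR y) = Elem.mv x) ∧
      (¬ ∃ (n : ℕ) (a : Fin n) (m : ℕ) (c : Fin m) (y : U.tu n a m c),
        Elem.mv (U.tuOut y) = Elem.mv x ∨ Elem.mv (U.tuInp y) = Elem.mv x)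
  | .fk _ => True
  | .tu _ => True

/-- The causal graph `G_U` of `U`, as an edge relation on elements: edges from the
sources of each core to the core and from the core to its targets, from each player
to its channels, and from each created channel to its creating core. -/
inductive CEdge (U : CPsh) : Elem U → Elem U → Prop where
  | plChan {n : ℕ} (x : U.pl n) (i : Fin n) :
      CEdge U (.pl x) (.chan (U.plChan x i))
  | mvSrc {s : MShape} (x : U.mv s) : IsCore U (.mv x) →
      CEdge U (.pl (U.mvS x)) (.mv x)
  | mvTgt {s : MShape} (x : U.mv s) : IsCore U (.mv x) →
      CEdge U (.mv x) (.pl (U.mvT x))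
  | fkSrcL {n : ℕ} (x : U.fk n) : CEdge U (.pl (U.mvS (U.fkL x))) (.fk x)
  | fkSrcR {n : ℕ} (x : U.fk n) : CEdge U (.pl (U.mvS (U.fkR x))) (.fk x)
  | fkTgt {n : ℕ} (x : U.fk n) : CEdge U (.fk x) (.pl (U.mvT (U.fkL x)))
  | tuSrcO {n a m c} (x : U.tu n a m c) : CEdge U (.pl (U.mvS (U.tuOut x))) (.tu x)
  | tuSrcI {n a m c} (x : U.tu n a m c) : CEdge U (.pl (U.mvS (U.tuInp x))) (.tu x)
  | tuTgtO {n a m c} (x : U.tu n a m c) : CEdge U (.tu x) (.pl (U.mvT (U.tuOut x)))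
  | tuTgtI {n a m c} (x : U.tu n a m c) : CEdge U (.tu x) (.pl (U.mvT (U.tuInp x)))
  | nuChan {n : ℕ} (x : U.mv (.nu n)) : IsCore U (.mv x) →
      CEdge U (.chan (U.plChan (U.mvS x) (Fin.last n))) (.mv x)

/-- Players-or-channels among elements. -/
def IsPlChan (U : CPsh) : Elem U → Prop
  | .pl _ => True
  | .chan _ => True
  | _ => False

/-- Players among elements. -/
def IsPlayer (U : CPsh) : Elem U → Prop
  | .pl _ => True
  | _ => False

/-- `G_U` is source-linear: no player or channel has edges to two distinct cores. -/
def SourceLinear (U : CPsh) : Prop :=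
  ∀ x μ μ' : Elem U, IsPlChan U x → IsCore U μ → IsCore U μ' →
    CEdge U x μ → CEdge U x μ' → μ = μ'

/-- `G_U` is target-linear: no player has edges from two distinct cores. -/
def TargetLinear (U : CPsh) : Prop :=
  ∀ μ μ' x : Elem U, IsCore U μ → IsCore U μ' → IsPlayer U x →
    CEdge U μ x → CEdge U μ' x → μ = μ'

/-- `G_U` is acyclic (in the directed sense). -/
def AcyclicU (U : CPsh) : Prop :=
  ∀ e : Elem U, ¬ Relation.TransGen (CEdge U) e e

/-- The past of a core `μ`: the images of the elements of the corresponding seed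
which are not in the final position of the seed. -/
def pastOf (U : CPsh) : Elem U → Set (Elem U)
  | .mv x => {Elem.pl (U.mvT x), Elem.mv x}
  | .fk x => {Elem.pl (U.mvT (U.fkL x)), Elem.mv (U.fkL x), Elem.mv (U.fkR x),
      Elem.fk x}
  | .tu x => {Elem.pl (U.mvT (U.tuOut x)), Elem.pl (U.mvT (U.tuInp x)),
      Elem.mv (U.tuOut x), Elem.mv (U.tuInp x), Elem.tu x}
  | _ => ∅

/-- A set of elements of `U` is a subpresheaf when it is closed under the actions of
the morphisms of `C`. -/
def IsSub (U : CPsh) (S : Set (Elem U)) : Prop :=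
  (∀ {n : ℕ} (x : U.pl n) (i : Fin n), Elem.pl x ∈ S → Elem.chan (U.plChan x i) ∈ S) ∧
  (∀ {s : MShape} (x : U.mv s), Elem.mv x ∈ S →
    Elem.pl (U.mvS x) ∈ S ∧ Elem.pl (U.mvT x) ∈ S) ∧
  (∀ {n : ℕ} (x : U.fk n), Elem.fk x ∈ S →
    Elem.mv (U.fkL x) ∈ S ∧ Elem.mv (U.fkR x) ∈ S) ∧
  (∀ {n a m c} (x : U.tu n a m c), Elem.tu x ∈ S →
    Elem.mv (U.tuOut x) ∈ S ∧ Elem.mv (U.tuInp x) ∈ S)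

/-- `U ⧹ μ`: the largest subpresheaf of `U` avoiding the past of `μ`, i.e. the union
of all subpresheaves disjoint from `pastOf U μ`. -/
def cdiff (U : CPsh) (μ : Elem U) : Set (Elem U) :=
  {e | ∃ S : Set (Elem U), IsSub U S ∧ S ∩ pastOf U μ = ∅ ∧ e ∈ S}

/-- `μ` is a maximal core: there is no path in `G_U` from `μ` to any other core. -/
def MaximalCore (U : CPsh) (μ : Elem U) : Prop :=
  IsCore U μ ∧ ∀ e, IsCore U e → Relation.TransGen (CEdge U) μ e → e = μ

/-! The complement of `past(μ)` is itself a subpresheaf, so it is the largest one avoiding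
`past(μ)`. Every move lies in the past of some core `z`, which receives an edge from the
move's source player and sends one to its target player. If the source player were in
`past(μ)`, the path `μ → player → z` and maximality would force `z = μ`; if the target
player were, target-linearity would. A component of a fork or synchronisation `y` that lies
in `past(μ)` has its source player pointing both to `μ` and to `y`, so source-linearity
forces `y = μ`. -/

section

variable {U : CPsh}

lemma chan_notMem_pastOf (μ : Elem U) (a : U.chan) : Elem.chan a ∉ pastOf U μ := by
  cases μ <;> simp [pastOf]

lemma IsCore.mem_pastOf_self {z : Elem U} (hz : IsCore U z) : z ∈ pastOf U z := by
  cases z <;> simp_all [pastOf, IsCore]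

lemma IsCore.cEdge_of_pl_mem_pastOf {z : Elem U} (hz : IsCore U z) {n : ℕ} {p : U.pl n}
    (h : Elem.pl p ∈ pastOf U z) : CEdge U z (.pl p) := by
  cases z <;> rcases h with h | h | h | h | h <;> cases h <;>
    first | exact .mvTgt _ hz | constructor

lemma IsCore.cEdge_mvS_of_mv_mem_pastOf {z : Elem U} (hz : IsCore U z) {s : MShape}
    {x : U.mv s} (h : Elem.mv x ∈ pastOf U z) : CEdge U (.pl (U.mvS x)) z := by
  -- when `z` is the move itself, `rcases` has already substituted the equation
  cases z <;> rcases h with h | h | h | h | h <;> (try cases h) <;>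
    first | exact .mvSrc _ hz | constructor

lemma IsCore.cEdge_mvT_of_mv_mem_pastOf {z : Elem U} (hz : IsCore U z) {s : MShape}
    {x : U.mv s} (h : Elem.mv x ∈ pastOf U z) : CEdge U z (.pl (U.mvT x)) := by
  cases z <;> rcases h with h | h | h | h | h <;> (try cases h)
  case fk.inr.inr.inl.refl y => rw [← U.fk_coh y]; exact .fkTgt y
  all_goals first | exact .mvTgt _ hz | constructor

lemma exists_isCore_mv_mem_pastOf {s : MShape} (x : U.mv s) :
    ∃ z, IsCore U z ∧ Elem.mv x ∈ pastOf U z := by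
  by_cases hx : IsCore U (.mv x)
  · exact ⟨_, hx, hx.mem_pastOf_self⟩
  simp only [IsCore, not_and_or, not_not] at hx
  obtain ⟨n, y, h | h⟩ | ⟨n, a, m, c, y, h | h⟩ := hx <;> rw [← h]
  · exact ⟨.fk y, trivial, by simp [pastOf]⟩
  · exact ⟨.fk y, trivial, by simp [pastOf]⟩
  · exact ⟨.tu y, trivial, by simp [pastOf]⟩
  · exact ⟨.tu y, trivial, by simp [pastOf]⟩

lemma SourceLinear.eq_of_mv_mem_pastOf (hsl : SourceLinear U) {z z' : Elem U}
    (hz : IsCore U z) (hz' : IsCore U z') {s : MShape} {x : U.mv s}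
    (h : Elem.mv x ∈ pastOf U z) (h' : Elem.mv x ∈ pastOf U z') : z = z' :=
  hsl (.pl (U.mvS x)) z z' trivial hz hz' (hz.cEdge_mvS_of_mv_mem_pastOf h)
    (hz'.cEdge_mvS_of_mv_mem_pastOf h')

lemma MaximalCore.mvS_notMem_pastOf {μ : Elem U} (hμ : MaximalCore U μ) {s : MShape}
    {x : U.mv s} (hx : Elem.mv x ∉ pastOf U μ) : Elem.pl (U.mvS x) ∉ pastOf U μ := by
  intro hS
  obtain ⟨z, hz, hxz⟩ := exists_isCore_mv_mem_pastOf x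
  have hzμ : z = μ := hμ.2 z hz <|
    .head (hμ.1.cEdge_of_pl_mem_pastOf hS) (.single (hz.cEdge_mvS_of_mv_mem_pastOf hxz))
  exact hx (hzμ ▸ hxz)

lemma TargetLinear.mvT_notMem_pastOf (htl : TargetLinear U) {μ : Elem U} (hμ : IsCore U μ)
    {s : MShape} {x : U.mv s} (hx : Elem.mv x ∉ pastOf U μ) :
    Elem.pl (U.mvT x) ∉ pastOf U μ := by
  intro hT
  obtain ⟨z, hz, hxz⟩ := exists_isCore_mv_mem_pastOf x
  have hzμ : z = μ := htl z μ (.pl (U.mvT x)) hz hμ trivial (hz.cEdge_mvT_of_mv_mem_pastOf hxz)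
    (hμ.cEdge_of_pl_mem_pastOf hT)
  exact hx (hzμ ▸ hxz)

lemma SourceLinear.notMem_pastOf_of_mv_mem_pastOf (hsl : SourceLinear U) {μ z : Elem U}
    (hμ : IsCore U μ) (hz : IsCore U z) (hzμ : z ∉ pastOf U μ) {s : MShape} {x : U.mv s}
    (hxz : Elem.mv x ∈ pastOf U z) : Elem.mv x ∉ pastOf U μ := fun hxμ ↦
  hzμ (hsl.eq_of_mv_mem_pastOf hz hμ hxz hxμ ▸ hμ.mem_pastOf_self)

lemma isSub_compl_pastOf (hsl : SourceLinear U) (htl : TargetLinear U) {μ : Elem U}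
    (hμ : MaximalCore U μ) : IsSub U (pastOf U μ)ᶜ := by
  refine ⟨fun _ _ _ ↦ chan_notMem_pastOf μ _,
    fun _ hx ↦ ⟨hμ.mvS_notMem_pastOf hx, htl.mvT_notMem_pastOf hμ.1 hx⟩,
    fun y hy ↦ ?_, fun y hy ↦ ?_⟩
  · exact ⟨hsl.notMem_pastOf_of_mv_mem_pastOf (z := .fk y) hμ.1 trivial hy (by simp [pastOf]),
      hsl.notMem_pastOf_of_mv_mem_pastOf (z := .fk y) hμ.1 trivial hy (by simp [pastOf])⟩
  · exact ⟨hsl.notMem_pastOf_of_mv_mem_pastOf (z := .tu y) hμ.1 trivial hy (by simp [pastOf]),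
      hsl.notMem_pastOf_of_mv_mem_pastOf (z := .tu y) hμ.1 trivial hy (by simp [pastOf])⟩

lemma mem_cdiff_iff_of_isSub_compl {μ : Elem U} (h : IsSub U (pastOf U μ)ᶜ) (e : Elem U) :
    e ∈ cdiff U μ ↔ e ∉ pastOf U μ :=
  ⟨fun ⟨_, _, hS, he⟩ hpast ↦ (hS ▸ ⟨he, hpast⟩ : e ∈ (∅ : Set (Elem U))),
    fun he ↦ ⟨_, h, Set.compl_inter_self _, he⟩⟩

end

theorem stmt16_general (U : CPsh) (hsl : SourceLinear U)
    (μ : Elem U) (hmax : MaximalCore U μ) (htl : TargetLinear U) :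
    ∀ e : Elem U, e ∈ cdiff U μ ↔ e ∉ pastOf U μ :=
  mem_cdiff_iff_of_isSub_compl (isSub_compl_pastOf hsl htl hmax)

/-- if the causal graph `G_U` is source-linear and acyclic, `μ` is a
maximal core of `U`, and `G_U` is target-linear, then the largest subpresheaf of `U`
avoiding the past of `μ` is computed pointwise:
`(U ⧹ μ)(c) = U(c) ∖ past(μ)` for every object `c`, i.e. an element of `U` lies in
`U ⧹ μ` iff it is not in the past of `μ`. -/
theorem stmt16 (U : CPsh) (hsl : SourceLinear U) (hac : AcyclicU U)
    (μ : Elem U) (hmax : MaximalCore U μ) (htl : TargetLinear U) :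
    ∀ e : Elem U, e ∈ cdiff U μ ↔ e ∉ pastOf U μ :=
  stmt16_general U hsl μ hmax htl
end
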